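/- Let c be an integer and T_c = ℚ[a,b]/(b⁸, a⁴ + c·a³·b). Let P̃ = (1−b²)⁸·((1+a)⁴ + c·b·(1+a)³)·((1−a)⁴ − c·b·(1−a)³) ∈ T_c and for each i let p_i = (−1)ⁱ times the homogeneous degree-2i component of P̃ (with deg a = deg b = 1). Then p₂·p₃ = −c³(3c⁴ + 96c² + 580) · a³b⁷ in T_c. (Equivalently: the Pontryagin number p₂p₃[Z²⁰_c] equals −c³(3c⁴+96c²+580).) -/
import Mathlib

open MvPolynomial

namespace HW14

noncomputable def a : MvPolynomial (Fin 2) ℚ := X 0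
noncomputable def b : MvPolynomial (Fin 2) ℚ := X 1

noncomputable def I (c : ℤ) : Ideal (MvPolynomial (Fin 2) ℚ) :=
  Ideal.span {b ^ 8, a ^ 4 + C (c : ℚ) * (a ^ 3 * b)}

noncomputable def Pt (c : ℤ) : MvPolynomial (Fin 2) ℚ :=
  (1 - b ^ 2) ^ 8 * ((1 + a) ^ 4 + C (c : ℚ) * b * (1 + a) ^ 3) *
    ((1 - a) ^ 4 - C (c : ℚ) * b * (1 - a) ^ 3)

/-- `p c i` is `(-1)^i` times the homogeneous degree-`2*i` component of `Pt c`
(with `deg a = deg b = 1`), i.e. the `i`-th Pontryagin class. -/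
noncomputable def p (c : ℤ) (i : ℕ) : MvPolynomial (Fin 2) ℚ :=
  ((-1 : ℚ) ^ i) • homogeneousComponent (2 * i) (Pt c)

lemma term_hom (c : ℤ) (q : ℚ) (m i j n : ℕ) (h : i + j = n) :
    (C q * C (c : ℚ) ^ m * (a ^ i * b ^ j)).IsHomogeneous n := by
  subst h
  unfold a b
  have := (((isHomogeneous_C (Fin 2) q).mul ((isHomogeneous_C (Fin 2) ((c : ℚ))).pow m)).mul
    (((isHomogeneous_X ℚ (0 : Fin 2)).pow i).mul ((isHomogeneous_X ℚ (1 : Fin 2)).pow j)))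
  simpa using this

noncomputable def H0 (c : ℤ) : MvPolynomial (Fin 2) ℚ :=
  C (1 : ℚ) * C (c : ℚ) ^ 0 * (a ^ 0 * b ^ 0)

lemma H0_hom (c : ℤ) : (H0 c).IsHomogeneous 0 := by
  unfold H0
  exact term_hom c (1) 0 0 0 0 rfl

noncomputable def H2 (c : ℤ) : MvPolynomial (Fin 2) ℚ :=
  C (-8 : ℚ) * C (c : ℚ) ^ 0 * (a ^ 0 * b ^ 2) + C (-1 : ℚ) * C (c : ℚ) ^ 2 * (a ^ 0 * b ^ 2) + C (-2 : ℚ) * C (c : ℚ) ^ 1 * (a ^ 1 * b ^ 1) + C (-4 : ℚ) * C (c : ℚ) ^ 0 * (a ^ 2 * b ^ 0)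

lemma H2_hom (c : ℤ) : (H2 c).IsHomogeneous 2 := by
  unfold H2
  exact (((term_hom c (-8) 0 0 2 2 rfl).add (term_hom c (-1) 2 0 2 2 rfl)).add (term_hom c (-2) 1 1 1 2 rfl)).add (term_hom c (-4) 0 2 0 2 rfl)

noncomputable def H4 (c : ℤ) : MvPolynomial (Fin 2) ℚ :=
  C (28 : ℚ) * C (c : ℚ) ^ 0 * (a ^ 0 * b ^ 4) + C (8 : ℚ) * C (c : ℚ) ^ 2 * (a ^ 0 * b ^ 4) + C (16 : ℚ) * C (c : ℚ) ^ 1 * (a ^ 1 * b ^ 3) + C (32 : ℚ) * C (c : ℚ) ^ 0 * (a ^ 2 * b ^ 2) + C (3 : ℚ) * C (c : ℚ) ^ 2 * (a ^ 2 * b ^ 2) + C (6 : ℚ) * C (c : ℚ) ^ 1 * (a ^ 3 * b ^ 1) + C (6 : ℚ) * C (c : ℚ) ^ 0 * (a ^ 4 * b ^ 0)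

lemma H4_hom (c : ℤ) : (H4 c).IsHomogeneous 4 := by
  unfold H4
  exact ((((((term_hom c (28) 0 0 4 4 rfl).add (term_hom c (8) 2 0 4 4 rfl)).add (term_hom c (16) 1 1 3 4 rfl)).add (term_hom c (32) 0 2 2 4 rfl)).add (term_hom c (3) 2 2 2 4 rfl)).add (term_hom c (6) 1 3 1 4 rfl)).add (term_hom c (6) 0 4 0 4 rfl)

noncomputable def H6 (c : ℤ) : MvPolynomial (Fin 2) ℚ :=
  C (-56 : ℚ) * C (c : ℚ) ^ 0 * (a ^ 0 * b ^ 6) + C (-28 : ℚ) * C (c : ℚ) ^ 2 * (a ^ 0 * b ^ 6) + C (-56 : ℚ) * C (c : ℚ) ^ 1 * (a ^ 1 * b ^ 5) + C (-112 : ℚ) * C (c : ℚ) ^ 0 * (a ^ 2 * b ^ 4) + C (-24 : ℚ) * C (c : ℚ) ^ 2 * (a ^ 2 * b ^ 4) + C (-48 : ℚ) * C (c : ℚ) ^ 1 * (a ^ 3 * b ^ 3) + C (-48 : ℚ) * C (c : ℚ) ^ 0 * (a ^ 4 * b ^ 2) + C (-3 : ℚ) * C (c : ℚ) ^ 2 *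 (a ^ 4 * b ^ 2) + C (-6 : ℚ) * C (c : ℚ) ^ 1 * (a ^ 5 * b ^ 1) + C (-4 : ℚ) * C (c : ℚ) ^ 0 * (a ^ 6 * b ^ 0)

lemma H6_hom (c : ℤ) : (H6 c).IsHomogeneous 6 := by
  unfold H6
  exact (((((((((term_hom c (-56) 0 0 6 6 rfl).add (term_hom c (-28) 2 0 6 6 rfl)).add (term_hom c (-56) 1 1 5 6 rfl)).add (term_hom c (-112) 0 2 4 6 rfl)).add (term_hom c (-24) 2 2 4 6 rfl)).add (term_hom c (-48) 1 3 3 6 rfl)).add (term_hom c (-48) 0 4 2 6 rfl)).add (term_hom c (-3) 2 4 2 6 rfl)).add (term_hom c (-6) 1 5 1 6 rfl)).add (term_hom c (-4) 0 6 0 6 rfl)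

noncomputable def H8 (c : ℤ) : MvPolynomial (Fin 2) ℚ :=
  C (70 : ℚ) * C (c : ℚ) ^ 0 * (a ^ 0 * b ^ 8) + C (56 : ℚ) * C (c : ℚ) ^ 2 * (a ^ 0 * b ^ 8) + C (112 : ℚ) * C (c : ℚ) ^ 1 * (a ^ 1 * b ^ 7) + C (224 : ℚ) * C (c : ℚ) ^ 0 * (a ^ 2 * b ^ 6) + C (84 : ℚ) * C (c : ℚ) ^ 2 * (a ^ 2 * b ^ 6) + C (168 : ℚ) * C (c : ℚ) ^ 1 * (a ^ 3 * b ^ 5) + C (168 : ℚ) * C (c : ℚ) ^ 0 * (a ^ 4 * b ^ 4) + C (24 : ℚ) * C (c : ℚ) ^ 2 * (a ^ 4 * b ^ 4) + C (48 : ℚ) * C (c : ℚ) ^ 1 * (a ^ 5 * b ^ 3) + C (32 : ℚ) * C (c : ℚ) ^ 0 * (a ^ 6 * b ^ 2) + C (1 : ℚ) * C (c : ℚ) ^ 2 * (a ^ 6 * b ^ 2) + C (2 : ℚ) * C (c : ℚ) ^ 1 * (a ^ 7 * b ^ 1) + C (1 : ℚ) * C (c : ℚ) ^ 0 * (a ^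 8 * b ^ 0)

lemma H8_hom (c : ℤ) : (H8 c).IsHomogeneous 8 := by
  unfold H8
  exact ((((((((((((term_hom c (70) 0 0 8 8 rfl).add (term_hom c (56) 2 0 8 8 rfl)).add (term_hom c (112) 1 1 7 8 rfl)).add (term_hom c (224) 0 2 6 8 rfl)).add (term_hom c (84) 2 2 6 8 rfl)).add (term_hom c (168) 1 3 5 8 rfl)).add (term_hom c (168) 0 4 4 8 rfl)).add (term_hom c (24) 2 4 4 8 rfl)).add (term_hom c (48) 1 5 3 8 rfl)).add (term_hom c (32) 0 6 2 8 rfl)).add (term_hom c (1) 2 6 2 8 rfl)).add (term_hom c (2) 1 7 1 8 rfl)).add (term_hom c (1) 0 8 0 8 rfl)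

noncomputable def H10 (c : ℤ) : MvPolynomial (Fin 2) ℚ :=
  C (-56 : ℚ) * C (c : ℚ) ^ 0 * (a ^ 0 * b ^ 10) + C (-70 : ℚ) * C (c : ℚ) ^ 2 * (a ^ 0 * b ^ 10) + C (-140 : ℚ) * C (c : ℚ) ^ 1 * (a ^ 1 * b ^ 9) + C (-280 : ℚ) * C (c : ℚ) ^ 0 * (a ^ 2 * b ^ 8) + C (-168 : ℚ) * C (c : ℚ) ^ 2 * (a ^ 2 * b ^ 8) + C (-336 : ℚ) * C (c : ℚ) ^ 1 * (a ^ 3 * b ^ 7) + C (-336 : ℚ) * C (c : ℚ) ^ 0 * (a ^ 4 * b ^ 6) + C (-84 : ℚ) * C (c : ℚ) ^ 2 * (a ^ 4 * b ^ 6) + C (-168 : ℚ) * C (c : ℚ) ^ 1 * (a ^ 5 * b ^ 5) + C (-112 : ℚ) * C (c : ℚ) ^ 0 * (a ^ 6 * b ^ 4) + C (-8 : ℚ) * C (c : ℚ) ^ 2 * (a ^ 6 * b ^ 4) + C (-16 : ℚ) * C (c : ℚ) ^ 1 * (a ^ 7 * b ^ 3) + C (-8 : ℚ) * C (c : ℚ)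 ^ 0 * (a ^ 8 * b ^ 2)

lemma H10_hom (c : ℤ) : (H10 c).IsHomogeneous 10 := by
  unfold H10
  exact ((((((((((((term_hom c (-56) 0 0 10 10 rfl).add (term_hom c (-70) 2 0 10 10 rfl)).add (term_hom c (-140) 1 1 9 10 rfl)).add (term_hom c (-280) 0 2 8 10 rfl)).add (term_hom c (-168) 2 2 8 10 rfl)).add (term_hom c (-336) 1 3 7 10 rfl)).add (term_hom c (-336) 0 4 6 10 rfl)).add (term_hom c (-84) 2 4 6 10 rfl)).add (term_hom c (-168) 1 5 5 10 rfl)).add (term_hom c (-112) 0 6 4 10 rfl)).add (term_hom c (-8) 2 6 4 10 rfl)).add (term_hom c (-16) 1 7 3 10 rfl)).add (term_hom c (-8) 0 8 2 10 rfl)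

noncomputable def H12 (c : ℤ) : MvPolynomial (Fin 2) ℚ :=
  C (28 : ℚ) * C (c : ℚ) ^ 0 * (a ^ 0 * b ^ 12) + C (56 : ℚ) * C (c : ℚ) ^ 2 * (a ^ 0 * b ^ 12) + C (112 : ℚ) * C (c : ℚ) ^ 1 * (a ^ 1 * b ^ 11) + C (224 : ℚ) * C (c : ℚ) ^ 0 * (a ^ 2 * b ^ 10) + C (210 : ℚ) * C (c : ℚ) ^ 2 * (a ^ 2 * b ^ 10) + C (420 : ℚ) * C (c : ℚ) ^ 1 * (a ^ 3 * b ^ 9) + C (420 : ℚ) * C (c : ℚ) ^ 0 * (a ^ 4 * b ^ 8) + C (168 : ℚ) * C (c : ℚ) ^ 2 * (a ^ 4 * b ^ 8) + C (336 : ℚ) * C (c : ℚ) ^ 1 * (a ^ 5 * b ^ 7) + C (224 : ℚ) * C (c : ℚ) ^ 0 * (a ^ 6 * b ^ 6) + C (28 : ℚ) * C (c : ℚ) ^ 2 * (a ^ 6 * b ^ 6) + C (56 : ℚ) * C (c : ℚ) ^ 1 * (a ^ 7 * b ^ 5) + C (28 : ℚ) * C (c : ℚ) ^ 0 * (a ^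 8 * b ^ 4)

lemma H12_hom (c : ℤ) : (H12 c).IsHomogeneous 12 := by
  unfold H12
  exact ((((((((((((term_hom c (28) 0 0 12 12 rfl).add (term_hom c (56) 2 0 12 12 rfl)).add (term_hom c (112) 1 1 11 12 rfl)).add (term_hom c (224) 0 2 10 12 rfl)).add (term_hom c (210) 2 2 10 12 rfl)).add (term_hom c (420) 1 3 9 12 rfl)).add (term_hom c (420) 0 4 8 12 rfl)).add (term_hom c (168) 2 4 8 12 rfl)).add (term_hom c (336) 1 5 7 12 rfl)).add (term_hom c (224) 0 6 6 12 rfl)).add (term_hom c (28) 2 6 6 12 rfl)).add (term_hom c (56) 1 7 5 12 rfl)).add (term_hom c (28) 0 8 4 12 rfl)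

noncomputable def H14 (c : ℤ) : MvPolynomial (Fin 2) ℚ :=
  C (-8 : ℚ) * C (c : ℚ) ^ 0 * (a ^ 0 * b ^ 14) + C (-28 : ℚ) * C (c : ℚ) ^ 2 * (a ^ 0 * b ^ 14) + C (-56 : ℚ) * C (c : ℚ) ^ 1 * (a ^ 1 * b ^ 13) + C (-112 : ℚ) * C (c : ℚ) ^ 0 * (a ^ 2 * b ^ 12) + C (-168 : ℚ) * C (c : ℚ) ^ 2 * (a ^ 2 * b ^ 12) + C (-336 : ℚ) * C (c : ℚ) ^ 1 * (a ^ 3 * b ^ 11) + C (-336 : ℚ) * C (c : ℚ) ^ 0 * (a ^ 4 * b ^ 10) + C (-210 : ℚ) * C (c : ℚ) ^ 2 * (a ^ 4 * b ^ 10) + C (-420 : ℚ) * C (c : ℚ) ^ 1 * (a ^ 5 * b ^ 9) + C (-280 : ℚ) * C (c : ℚ) ^ 0 * (a ^ 6 * b ^ 8) + C (-56 : ℚ) * C (c : ℚ) ^ 2 * (a ^ 6 * b ^ 8) + C (-112 : ℚ) * C (c : ℚ) ^ 1 * (a ^ 7 * b ^ 7) + C (-56 : ℚ) * C (c : ℚ)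 ^ 0 * (a ^ 8 * b ^ 6)

lemma H14_hom (c : ℤ) : (H14 c).IsHomogeneous 14 := by
  unfold H14
  exact ((((((((((((term_hom c (-8) 0 0 14 14 rfl).add (term_hom c (-28) 2 0 14 14 rfl)).add (term_hom c (-56) 1 1 13 14 rfl)).add (term_hom c (-112) 0 2 12 14 rfl)).add (term_hom c (-168) 2 2 12 14 rfl)).add (term_hom c (-336) 1 3 11 14 rfl)).add (term_hom c (-336) 0 4 10 14 rfl)).add (term_hom c (-210) 2 4 10 14 rfl)).add (term_hom c (-420) 1 5 9 14 rfl)).add (term_hom c (-280) 0 6 8 14 rfl)).add (term_hom c (-56) 2 6 8 14 rfl)).add (term_hom c (-112) 1 7 7 14 rfl)).add (term_hom c (-56) 0 8 6 14 rfl)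

noncomputable def H16 (c : ℤ) : MvPolynomial (Fin 2) ℚ :=
  C (1 : ℚ) * C (c : ℚ) ^ 0 * (a ^ 0 * b ^ 16) + C (8 : ℚ) * C (c : ℚ) ^ 2 * (a ^ 0 * b ^ 16) + C (16 : ℚ) * C (c : ℚ) ^ 1 * (a ^ 1 * b ^ 15) + C (32 : ℚ) * C (c : ℚ) ^ 0 * (a ^ 2 * b ^ 14) + C (84 : ℚ) * C (c : ℚ) ^ 2 * (a ^ 2 * b ^ 14) + C (168 : ℚ) * C (c : ℚ) ^ 1 * (a ^ 3 * b ^ 13) + C (168 : ℚ) * C (c : ℚ) ^ 0 * (a ^ 4 * b ^ 12) + C (168 : ℚ) * C (c : ℚ) ^ 2 * (a ^ 4 * b ^ 12) + C (336 : ℚ) * C (c : ℚ) ^ 1 * (a ^ 5 * b ^ 11) + C (224 : ℚ) * C (c : ℚ) ^ 0 * (a ^ 6 * b ^ 10) + C (70 : ℚ) * C (c : ℚ) ^ 2 * (a ^ 6 * b ^ 10) + C (140 : ℚ) * C (c : ℚ) ^ 1 * (a ^ 7 * b ^ 9) + C (70 : ℚ) * C (c : ℚ) ^ 0 * (a ^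 8 * b ^ 8)

lemma H16_hom (c : ℤ) : (H16 c).IsHomogeneous 16 := by
  unfold H16
  exact ((((((((((((term_hom c (1) 0 0 16 16 rfl).add (term_hom c (8) 2 0 16 16 rfl)).add (term_hom c (16) 1 1 15 16 rfl)).add (term_hom c (32) 0 2 14 16 rfl)).add (term_hom c (84) 2 2 14 16 rfl)).add (term_hom c (168) 1 3 13 16 rfl)).add (term_hom c (168) 0 4 12 16 rfl)).add (term_hom c (168) 2 4 12 16 rfl)).add (term_hom c (336) 1 5 11 16 rfl)).add (term_hom c (224) 0 6 10 16 rfl)).add (term_hom c (70) 2 6 10 16 rfl)).add (term_hom c (140) 1 7 9 16 rfl)).add (term_hom c (70) 0 8 8 16 rfl)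

noncomputable def H18 (c : ℤ) : MvPolynomial (Fin 2) ℚ :=
  C (-1 : ℚ) * C (c : ℚ) ^ 2 * (a ^ 0 * b ^ 18) + C (-2 : ℚ) * C (c : ℚ) ^ 1 * (a ^ 1 * b ^ 17) + C (-4 : ℚ) * C (c : ℚ) ^ 0 * (a ^ 2 * b ^ 16) + C (-24 : ℚ) * C (c : ℚ) ^ 2 * (a ^ 2 * b ^ 16) + C (-48 : ℚ) * C (c : ℚ) ^ 1 * (a ^ 3 * b ^ 15) + C (-48 : ℚ) * C (c : ℚ) ^ 0 * (a ^ 4 * b ^ 14) + C (-84 : ℚ) * C (c : ℚ) ^ 2 * (a ^ 4 * b ^ 14) + C (-168 : ℚ) * C (c : ℚ) ^ 1 * (a ^ 5 * b ^ 13) + C (-112 : ℚ) * C (c : ℚ) ^ 0 * (a ^ 6 * b ^ 12) + C (-56 : ℚ) * C (c : ℚ) ^ 2 * (a ^ 6 * b ^ 12) + C (-112 : ℚ) * C (c : ℚ) ^ 1 * (a ^ 7 * b ^ 11) + C (-56 : ℚ) * C (c : ℚ) ^ 0 * (a ^ 8 * b ^ 10)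

lemma H18_hom (c : ℤ) : (H18 c).IsHomogeneous 18 := by
  unfold H18
  exact (((((((((((term_hom c (-1) 2 0 18 18 rfl).add (term_hom c (-2) 1 1 17 18 rfl)).add (term_hom c (-4) 0 2 16 18 rfl)).add (term_hom c (-24) 2 2 16 18 rfl)).add (term_hom c (-48) 1 3 15 18 rfl)).add (term_hom c (-48) 0 4 14 18 rfl)).add (term_hom c (-84) 2 4 14 18 rfl)).add (term_hom c (-168) 1 5 13 18 rfl)).add (term_hom c (-112) 0 6 12 18 rfl)).add (term_hom c (-56) 2 6 12 18 rfl)).add (term_hom c (-112) 1 7 11 18 rfl)).add (term_hom c (-56) 0 8 10 18 rfl)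

noncomputable def H20 (c : ℤ) : MvPolynomial (Fin 2) ℚ :=
  C (3 : ℚ) * C (c : ℚ) ^ 2 * (a ^ 2 * b ^ 18) + C (6 : ℚ) * C (c : ℚ) ^ 1 * (a ^ 3 * b ^ 17) + C (6 : ℚ) * C (c : ℚ) ^ 0 * (a ^ 4 * b ^ 16) + C (24 : ℚ) * C (c : ℚ) ^ 2 * (a ^ 4 * b ^ 16) + C (48 : ℚ) * C (c : ℚ) ^ 1 * (a ^ 5 * b ^ 15) + C (32 : ℚ) * C (c : ℚ) ^ 0 * (a ^ 6 * b ^ 14) + C (28 : ℚ) * C (c : ℚ) ^ 2 * (a ^ 6 * b ^ 14) + C (56 : ℚ) * C (c : ℚ) ^ 1 * (a ^ 7 * b ^ 13) + C (28 : ℚ) * C (c : ℚ) ^ 0 * (a ^ 8 * b ^ 12)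

lemma H20_hom (c : ℤ) : (H20 c).IsHomogeneous 20 := by
  unfold H20
  exact ((((((((term_hom c (3) 2 2 18 20 rfl).add (term_hom c (6) 1 3 17 20 rfl)).add (term_hom c (6) 0 4 16 20 rfl)).add (term_hom c (24) 2 4 16 20 rfl)).add (term_hom c (48) 1 5 15 20 rfl)).add (term_hom c (32) 0 6 14 20 rfl)).add (term_hom c (28) 2 6 14 20 rfl)).add (term_hom c (56) 1 7 13 20 rfl)).add (term_hom c (28) 0 8 12 20 rfl)

noncomputable def H22 (c : ℤ) : MvPolynomial (Fin 2) ℚ :=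
  C (-3 : ℚ) * C (c : ℚ) ^ 2 * (a ^ 4 * b ^ 18) + C (-6 : ℚ) * C (c : ℚ) ^ 1 * (a ^ 5 * b ^ 17) + C (-4 : ℚ) * C (c : ℚ) ^ 0 * (a ^ 6 * b ^ 16) + C (-8 : ℚ) * C (c : ℚ) ^ 2 * (a ^ 6 * b ^ 16) + C (-16 : ℚ) * C (c : ℚ) ^ 1 * (a ^ 7 * b ^ 15) + C (-8 : ℚ) * C (c : ℚ) ^ 0 * (a ^ 8 * b ^ 14)

lemma H22_hom (c : ℤ) : (H22 c).IsHomogeneous 22 := by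
  unfold H22
  exact (((((term_hom c (-3) 2 4 18 22 rfl).add (term_hom c (-6) 1 5 17 22 rfl)).add (term_hom c (-4) 0 6 16 22 rfl)).add (term_hom c (-8) 2 6 16 22 rfl)).add (term_hom c (-16) 1 7 15 22 rfl)).add (term_hom c (-8) 0 8 14 22 rfl)

noncomputable def H24 (c : ℤ) : MvPolynomial (Fin 2) ℚ :=
  C (1 : ℚ) * C (c : ℚ) ^ 2 * (a ^ 6 * b ^ 18) + C (2 : ℚ) * C (c : ℚ) ^ 1 * (a ^ 7 * b ^ 17) + C (1 : ℚ) * C (c : ℚ) ^ 0 * (a ^ 8 * b ^ 16)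

lemma H24_hom (c : ℤ) : (H24 c).IsHomogeneous 24 := by
  unfold H24
  exact ((term_hom c (1) 2 6 18 24 rfl).add (term_hom c (2) 1 7 17 24 rfl)).add (term_hom c (1) 0 8 16 24 rfl)

set_option maxHeartbeats 2000000 in
lemma decomp (c : ℤ) : Pt c = H0 c + H2 c + H4 c + H6 c + H8 c + H10 c + H12 c + H14 c + H16 c + H18 c + H20 c + H22 c + H24 c := by
  unfold Pt H0 H2 H4 H6 H8 H10 H12 H14 H16 H18 H20 H22 H24 a b
  simp only [map_neg, map_ofNat, map_one, map_zero]
  ring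

set_option maxHeartbeats 2000000 in
lemma comp4 (c : ℤ) : homogeneousComponent 4 (Pt c) = H4 c := by
  rw [decomp]
  simp only [map_add]
  rw [homogeneousComponent_of_mem ((mem_homogeneousSubmodule _ _).mpr (H0_hom c)), homogeneousComponent_of_mem ((mem_homogeneousSubmodule _ _).mpr (H2_hom c)), homogeneousComponent_of_mem ((mem_homogeneousSubmodule _ _).mpr (H4_hom c)), homogeneousComponent_of_mem ((mem_homogeneousSubmodule _ _).mpr (H6_hom c)), homogeneousComponent_of_mem ((mem_homogeneousSubmodule _ _).mpr (H8_hom c)), homogeneousComponent_of_mem ((mem_homogeneousSubmodule _ _).mpr (H10_hom c)), homogeneousComponent_of_mem ((mem_homogeneousSubmodule _ _).mpr (H12_hom c)), homogeneousComponent_of_mem ((mem_homogeneousSubmodule _ _).mpr (H14_hom c)), homogeneousComponent_of_mem ((mem_homogeneousSubmodule _ _).mpr (H16_hom c)), homogeneousComponent_of_mem ((mem_homogeneousSubmodule _ _).mpr (H18_hom c)), homogeneousComponent_of_mem ((mem_homogeneousSubmodule _ _).mpr (H20_hom c)), homogeneousComponent_of_mem ((mem_homogeneousSubmodule _ _).mpr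 (H22_hom c)), homogeneousComponent_of_mem ((mem_homogeneousSubmodule _ _).mpr (H24_hom c))]
  norm_num

set_option maxHeartbeats 2000000 in
lemma comp6 (c : ℤ) : homogeneousComponent 6 (Pt c) = H6 c := by
  rw [decomp]
  simp only [map_add]
  rw [homogeneousComponent_of_mem ((mem_homogeneousSubmodule _ _).mpr (H0_hom c)), homogeneousComponent_of_mem ((mem_homogeneousSubmodule _ _).mpr (H2_hom c)), homogeneousComponent_of_mem ((mem_homogeneousSubmodule _ _).mpr (H4_hom c)), homogeneousComponent_of_mem ((mem_homogeneousSubmodule _ _).mpr (H6_hom c)), homogeneousComponent_of_mem ((mem_homogeneousSubmodule _ _).mpr (H8_hom c)), homogeneousComponent_of_mem ((mem_homogeneousSubmodule _ _).mpr (H10_hom c)), homogeneousComponent_of_mem ((mem_homogeneousSubmodule _ _).mpr (H12_hom c)), homogeneousComponent_of_mem ((mem_homogeneousSubmodule _ _).mpr (H14_hom c)), homogeneousComponent_of_mem ((mem_homogeneousSubmodule _ _).mpr (H16_hom c)), homogeneousComponent_of_mem ((mem_homogeneousSubmodule _ _).mpr (H18_hom c)), homogeneousComponent_of_mem ((mem_homogeneousSubmodule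 _ _).mpr (H20_hom c)), homogeneousComponent_of_mem ((mem_homogeneousSubmodule _ _).mpr (H22_hom c)), homogeneousComponent_of_mem ((mem_homogeneousSubmodule _ _).mpr (H24_hom c))]
  norm_num

noncomputable def fco (c : ℤ) : MvPolynomial (Fin 2) ℚ :=
  C (1568 : ℚ) * C (c : ℚ) ^ 0 * (a ^ 0 * b ^ 2) + C (1232 : ℚ) * C (c : ℚ) ^ 2 * (a ^ 0 * b ^ 2) + C (224 : ℚ) * C (c : ℚ) ^ 4 * (a ^ 0 * b ^ 2) + C (2464 : ℚ) * C (c : ℚ) ^ 1 * (a ^ 1 * b ^ 1) + C (896 : ℚ) * C (c : ℚ) ^ 3 * (a ^ 1 * b ^ 1) + C (4928 : ℚ) * C (c : ℚ) ^ 0 * (a ^ 2 * b ^ 0) + C (3528 : ℚ) * C (c : ℚ) ^ 2 * (a ^ 2 * b ^ 0) + C (276 : ℚ) * C (c : ℚ) ^ 4 * (a ^ 2 * b ^ 0)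

noncomputable def gco (c : ℤ) : MvPolynomial (Fin 2) ℚ :=
  C (5264 : ℚ) * C (c : ℚ) ^ 0 * (a ^ 0 * b ^ 6) + C (1684 : ℚ) * C (c : ℚ) ^ 2 * (a ^ 0 * b ^ 6) + C (96 : ℚ) * C (c : ℚ) ^ 4 * (a ^ 0 * b ^ 6) + C (3 : ℚ) * C (c : ℚ) ^ 6 * (a ^ 0 * b ^ 6) + C (1160 : ℚ) * C (c : ℚ) ^ 1 * (a ^ 1 * b ^ 5) + C (-3 : ℚ) * C (c : ℚ) ^ 5 * (a ^ 1 * b ^ 5) + C (2320 : ℚ) * C (c : ℚ) ^ 0 * (a ^ 2 * b ^ 4) + C (384 : ℚ) * C (c : ℚ) ^ 2 * (a ^ 2 * b ^ 4) + C (3 : ℚ) * C (c : ℚ) ^ 4 * (a ^ 2 * b ^ 4) + C (416 : ℚ) * C (c : ℚ) ^ 1 * (a ^ 3 * b ^ 3) + C (6 : ℚ) * C (c : ℚ) ^ 3 * (a ^ 3 * b ^ 3) + C (416 : ℚ) * C (c : ℚ) ^ 0 * (a ^ 4 * b ^ 2) + C (30 : ℚ) * C (c : ℚ) ^ 2 *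 (a ^ 4 * b ^ 2) + C (36 : ℚ) * C (c : ℚ) ^ 1 * (a ^ 5 * b ^ 1) + C (24 : ℚ) * C (c : ℚ) ^ 0 * (a ^ 6 * b ^ 0)

set_option maxHeartbeats 2000000 in
theorem pontryagin_number (c : ℤ) :
    Ideal.Quotient.mk (I c) (p c 2 * p c 3) =
      Ideal.Quotient.mk (I c) (C (-(c : ℚ) ^ 3 * (3 * (c : ℚ) ^ 4 + 96 * (c : ℚ) ^ 2 + 580)) * (a ^ 3 * b ^ 7)) := by
  have h2 : p c 2 = H4 c := by
    have : (2 : ℕ) * 2 = 4 := rfl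
    simp [p, this, comp4]
  have h3 : p c 3 = -H6 c := by
    have : (2 : ℕ) * 3 = 6 := rfl
    simp [p, this, comp6, pow_succ]
  rw [Ideal.Quotient.eq]
  have key : p c 2 * p c 3 -
      C (-(c : ℚ) ^ 3 * (3 * (c : ℚ) ^ 4 + 96 * (c : ℚ) ^ 2 + 580)) * (a ^ 3 * b ^ 7) =
      fco c * b ^ 8 + gco c * (a ^ 4 + C (c : ℚ) * (a ^ 3 * b)) := by
    rw [h2, h3]
    unfold H4 H6 fco gco
    simp only [map_neg, map_ofNat, map_one, map_zero, map_mul, map_add, map_pow]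
    ring
  rw [key]
  exact Ideal.add_mem _
    (Ideal.mul_mem_left _ _ (Ideal.subset_span (Set.mem_insert _ _)))
    (Ideal.mul_mem_left _ _ (Ideal.subset_span (Set.mem_insert_of_mem _ rfl)))

end HW14
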